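/- Let D be a central division algebra over a field C of characteristic p > 0 and let (S,∘) be a division ring (not associative) such that: (1) S contains D as a subring, S is a free left D-module of rank p, and there exists t ∈ S such that 1, t, t², …, t^{p−1} is a D-basis of S, where t^{i+1} := t∘tⁱ and t⁰ = 1 for 0 ≤ i < p; (2) for every nonzero a ∈ D there is a' ∈ D with t∘a = a∘t + a'; (3) for all a,b,c ∈ D and all i,j,k with i+j < p and k < p, the associator [a∘tⁱ, b∘tʲ, c∘tᵏ] vanishes; (4) t^p = t + d for some nonzero d ∈ D (with t^p = t∘t^{p−1}). Then δ(a) := t∘a − a∘t defines a derivation on D, and S is isomorphic to the Petit algebra S_f for the irreducible polynomial f(t) = t^p − t − d ∈ D[t;δ]; moreover every automorphism H ∈ Aut_F(S_f) restricts to an automorphism of D, where F = Const(δ) ∩ C. -/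

import Mathlib

open Finsupp

section Defs

variable {D R : Type*}

/-- `δ` is a derivation on the (possibly noncommutative) ring `D`. -/
def IsDeriv [Ring D] (δ : D → D) : Prop :=
  (∀ a b, δ (a + b) = δ a + δ b) ∧ ∀ a b, δ (a * b) = a * δ b + δ a * b

/-- `(R, i, t, coeff)` realizes the differential polynomial ring `D[t;δ]`:
`t * a = a * t + δ a` for `a ∈ D`, and every element of `R` is uniquely of
the form `∑ aₙ tⁿ`, the `aₙ` being recorded by the additive equivalence `coeff`. -/
def IsDiffPolyRing [Ring D] [Ring R] (δ : D → D) (i : D →+* R) (t : R)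
    (coeff : R ≃+ (ℕ →₀ D)) : Prop :=
  (∀ a : D, t * i a = i a * t + i (δ a)) ∧
    ∀ (n : ℕ) (a : D), coeff.symm (Finsupp.single n a) = i a * t ^ n

/-- `r` has degree `< m`. -/
def DegLt [Ring D] [Ring R] (coeff : R ≃+ (ℕ →₀ D)) (m : ℕ) (r : R) : Prop :=
  ∀ n, m ≤ n → coeff r n = 0

/-- `f` is monic of degree `m`. -/
def MonicDeg [Ring D] [Ring R] (coeff : R ≃+ (ℕ →₀ D)) (m : ℕ) (f : R) : Prop :=
  coeff f m = 1 ∧ ∀ n, m < n → coeff f n = 0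

/-- The carrier of the Petit algebra `S_f`: all polynomials of degree `< m`. -/
def SfSet [Ring D] [Ring R] (coeff : R ≃+ (ℕ →₀ D)) (m : ℕ) : Set R :=
  {r | DegLt coeff m r}

/-- `mul` is the Petit multiplication: `mul x y = x·y mod_r f`, i.e. `mul x y`
has degree `< m` and differs from `x·y` by a left multiple of `f`. -/
def IsPetitMul [Ring D] [Ring R] (coeff : R ≃+ (ℕ →₀ D)) (f : R) (m : ℕ)
    (mul : R → R → R) : Prop :=
  ∀ x y : R, DegLt coeff m (mul x y) ∧ ∃ q : R, x * y = q * f + mul x y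

/-- `f` is right semi-invariant: `f·a ∈ D·f` for all `a ∈ D`. -/
def RightSemiInvariant [Ring D] [Ring R] (i : D →+* R) (f : R) : Prop :=
  ∀ a : D, ∃ b : D, f * i a = i b * f

/-- `f` is two-sided (invariant): the left ideal `Rf` is a two-sided ideal. -/
def TwoSidedElem [Ring R] (f : R) : Prop :=
  ∀ r : R, ∃ q : R, f * r = q * f

/-- `f` (of degree `m`) is irreducible: it has no factorization into factors
of degree `< m`. -/
def IrredDeg [Ring D] [Ring R] (coeff : R ≃+ (ℕ →₀ D)) (m : ℕ) (f : R) : Prop :=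
  ¬∃ g h : R, f = g * h ∧ DegLt coeff m g ∧ DegLt coeff m h

/-- `f` (of degree `m`) is irreducible as a polynomial with coefficients in
the subfield `Fset` of `D`. -/
def IrredOver [Ring D] [Ring R] (coeff : R ≃+ (ℕ →₀ D)) (Fset : Set D) (m : ℕ)
    (f : R) : Prop :=
  ¬∃ g h : R, f = g * h ∧ DegLt coeff m g ∧ DegLt coeff m h ∧
    (∀ n, coeff g n ∈ Fset) ∧ ∀ n, coeff h n ∈ Fset

/-- Left nucleus of the algebra `(S, mul)`. -/
def LeftNuc [Ring R] (S : Set R) (mul : R → R → R) : Set R :=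
  {x ∈ S | ∀ y ∈ S, ∀ z ∈ S, mul (mul x y) z = mul x (mul y z)}

/-- Middle nucleus of the algebra `(S, mul)`. -/
def MidNuc [Ring R] (S : Set R) (mul : R → R → R) : Set R :=
  {x ∈ S | ∀ y ∈ S, ∀ z ∈ S, mul (mul y x) z = mul y (mul x z)}

/-- Right nucleus of the algebra `(S, mul)`. -/
def RightNuc [Ring R] (S : Set R) (mul : R → R → R) : Set R :=
  {x ∈ S | ∀ y ∈ S, ∀ z ∈ S, mul (mul y z) x = mul y (mul z x)}

/-- `(S, mul)` is a division algebra: all nonzero left and right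
multiplications are bijective. -/
def IsDivAlg [Ring R] (S : Set R) (mul : R → R → R) : Prop :=
  ∀ x ∈ S, x ≠ 0 → Set.BijOn (mul x) S S ∧ Set.BijOn (fun y => mul y x) S S

/-- `(S, mul)` is associative. -/
def IsAssocOn [Ring R] (S : Set R) (mul : R → R → R) : Prop :=
  ∀ x ∈ S, ∀ y ∈ S, ∀ z ∈ S, mul (mul x y) z = mul x (mul y z)

/-- The constants of `δ`. -/
def ConstSet [Ring D] (δ : D → D) : Set D := {a | δ a = 0}

/-- The center of `D`. -/
def CenterSet (D : Type*) [Ring D] : Set D := {a | ∀ b, a * b = b * a}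

/-- `F₀ = Const(δ) ∩ C(D)`. -/
def F0Set [Ring D] (δ : D → D) : Set D := ConstSet δ ∩ CenterSet D

/-- The elements of the Petit algebra all of whose coefficients lie in `Fset`,
e.g. `Fset ⊕ Fset·t ⊕ ⋯ ⊕ Fset·t^{m-1}`. -/
def SubCoeffSet [Ring D] [Ring R] (coeff : R ≃+ (ℕ →₀ D)) (m : ℕ)
    (Fset : Set D) : Set R :=
  {r | DegLt coeff m r ∧ ∀ n, coeff r n ∈ Fset}

/-- `S ⊆ R` has dimension `k` over the subfield `Fset ⊆ D` (acting through `i`):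
there is an `Fset`-basis of size `k`. -/
def HasDim [Ring D] [Ring R] (Fset : Set D) (i : D →+* R) (S : Set R) (k : ℕ) : Prop :=
  ∃ b : Fin k → R, (∀ j, b j ∈ S) ∧
    ∀ x ∈ S, ∃! c : Fin k → D, (∀ j, c j ∈ Fset) ∧ x = ∑ j, i (c j) * b j

/-- `S ⊆ D` has dimension `k` over the subfield `Fset ⊆ D`. -/
def HasDimIn [Ring D] (Fset : Set D) (S : Set D) (k : ℕ) : Prop :=
  ∃ b : Fin k → D, (∀ j, b j ∈ S) ∧
    ∀ x ∈ S, ∃! c : Fin k → D, (∀ j, c j ∈ Fset) ∧ x = ∑ j, c j * b j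

/-- Substitution of `x` for `t` in `r = ∑ aₙ tⁿ`. -/
noncomputable def substT [Ring D] [Ring R] (coeff : R ≃+ (ℕ →₀ D)) (i : D →+* R) (r x : R) : R :=
  (coeff r).sum fun n c => i c * x ^ n

/-- `V_f(b)`: the constant `f(t) − f(t−b)`. -/
noncomputable def Vf [Ring D] [Ring R] (coeff : R ≃+ (ℕ →₀ D)) (i : D →+* R) (t f : R) (b : D) : D :=
  coeff (f - substT coeff i f (t - i b)) 0

/-- `V_p(b)`: the constant with `(t−b)^p = t^p − V_p(b)`. -/
noncomputable def Vp [Ring D] [Ring R] (coeff : R ≃+ (ℕ →₀ D)) (i : D →+* R) (t : R) (p : ℕ)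
    (b : D) : D :=
  coeff (t ^ p - (t - i b) ^ p) 0

/-- For commutative coefficients, `V_p(b) = b^p + δ^{p−1}(b)`. -/
def VpFun [Ring D] (δ : D → D) (p : ℕ) : D → D := fun b => b ^ p + δ^[p - 1] b

/-- `V(a) = V_{p^e}(a) + c₁ V_{p^{e−1}}(a) + ⋯ + c_e a`, computed with
`V_p(b) = b^p + δ^{p−1}(b)` (commutative case). -/
def Vg [Ring D] (δ : D → D) (p e : ℕ) (c : Fin e → D) : D → D :=
  fun a => (VpFun δ p)^[e] a + ∑ j : Fin e, c j * (VpFun δ p)^[e - 1 - (j : ℕ)] a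

/-- `V(a) = V_{p^e}(a) + c₁ V_{p^{e−1}}(a) + ⋯ + c_e a`, with `V_p` defined by
the identity `(t−b)^p = t^p − V_p(b)` in `D[t;δ]`. -/
noncomputable def VgR [Ring D] [Ring R] (coeff : R ≃+ (ℕ →₀ D)) (i : D →+* R) (t : R) (p e : ℕ)
    (c : Fin e → D) : D → D :=
  fun a => (Vp coeff i t p)^[e] a + ∑ j : Fin e, c j * (Vp coeff i t p)^[e - 1 - (j : ℕ)] a

/-- The map `G_{id,−a}` sending `∑ bₙ tⁿ` to `∑ bₙ (t−a)ⁿ`. -/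
noncomputable def Gmap [Ring D] [Ring R] (coeff : R ≃+ (ℕ →₀ D)) (i : D →+* R) (t : R) (a : D) :
    R → R :=
  fun r => substT coeff i r (t - i a)

/-- `H` is an isomorphism of `Fset`-algebras from `(S, mul)` onto `(S', mul')`. -/
def IsAlgIso [Ring D] [Ring R] (Fset : Set D) (i : D →+* R) (S S' : Set R)
    (mul mul' : R → R → R) (H : R → R) : Prop :=
  Set.BijOn H S S' ∧ (∀ x ∈ S, ∀ y ∈ S, H (x + y) = H x + H y) ∧
    (∀ x ∈ S, ∀ y ∈ S, H (mul x y) = mul' (H x) (H y)) ∧ H 1 = 1 ∧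
    ∀ a ∈ Fset, ∀ x ∈ S, H (i a * x) = i a * H x

/-- `H` is an `Fset`-algebra automorphism of the Petit algebra `(S, mul)`. -/
def IsAut [Ring D] [Ring R] (Fset : Set D) (i : D →+* R) (S : Set R)
    (mul : R → R → R) (H : R → R) : Prop :=
  IsAlgIso Fset i S S mul mul H

/-- The operator `δ^{p^e} + c₁ δ^{p^{e−1}} + ⋯ + c_e δ` vanishes on `Cset`,
i.e. the `p`-polynomial `t^{p^e} + c₁ t^{p^{e−1}} + ⋯ + c_e t` annihilates `δ|_{Cset}`. -/
def PPolyAnnOn [Ring D] (δ : D → D) (Cset : Set D) (p e : ℕ) (c : Fin e → D) : Prop :=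
  ∀ a ∈ Cset, δ^[p ^ e] a + ∑ j : Fin e, c j * δ^[p ^ (e - 1 - (j : ℕ))] a = 0

/-- `t^{p^e} + c₁ t^{p^{e−1}} + ⋯ + c_e t` (coefficients in `Fset`) is the minimum
`p`-polynomial of `δ` restricted to `Cset`. -/
def IsMinPPoly [Ring D] (δ : D → D) (Cset Fset : Set D) (p e : ℕ)
    (c : Fin e → D) : Prop :=
  (∀ j, c j ∈ Fset) ∧ PPolyAnnOn δ Cset p e c ∧
    ∀ e' : ℕ, e' < e → ∀ c' : Fin e' → D, (∀ j, c' j ∈ Fset) →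
      ¬PPolyAnnOn δ Cset p e' c'

/-- The natural map from `D[X]` to `R`, `∑ aₙ Xⁿ ↦ ∑ aₙ tⁿ`. -/
noncomputable def polyToR [Ring D] [Ring R] (i : D →+* R) (t : R) (q : Polynomial D) : R :=
  q.sum fun n a => i a * t ^ n

/-- The element `f ∈ R` rewritten as an ordinary polynomial in `D[X]`. -/
noncomputable def coeffPoly [Ring D] [Ring R] (coeff : R ≃+ (ℕ →₀ D)) (f : R) : Polynomial D :=
  (coeff f).sum fun n a => Polynomial.C a * Polynomial.X ^ n

/-- The set `T = Fset ⊕ Fset·t ⊕ ⋯ ⊕ Fset·t^{m−1} ⊆ S_f` is isomorphic, as a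
ring, to the quotient `Fset[X]/(f)`: the natural map `θ : ∑ aₙ Xⁿ ↦ ∑ aₙ tⁿ`,
from polynomials over `Fset` of degree `< m` with multiplication given by
reduction mod `f`, is a bijection onto `T` respecting all the operations. -/
def IsPolyQuotIso [Ring D] [Ring R] (Fset : Set D) (i : D →+* R)
    (coeff : R ≃+ (ℕ →₀ D)) (t f : R) (m : ℕ) (mul : R → R → R) (T : Set R) : Prop :=
  Set.BijOn (polyToR i t)
    {q : Polynomial D | (∀ n, q.coeff n ∈ Fset) ∧ q.degree < (m : WithBot ℕ)} T ∧
  (∀ q q' : Polynomial D, polyToR i t (q + q') = polyToR i t q + polyToR i t q') ∧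
  polyToR i t 1 = 1 ∧
  ∀ q ∈ {q : Polynomial D | (∀ n, q.coeff n ∈ Fset) ∧ q.degree < (m : WithBot ℕ)},
    ∀ q' ∈ {q : Polynomial D | (∀ n, q.coeff n ∈ Fset) ∧ q.degree < (m : WithBot ℕ)},
      ∃ s r : Polynomial D, q * q' = s * coeffPoly coeff f + r ∧
        r.degree < (m : WithBot ℕ) ∧
        polyToR i t r = mul (polyToR i t q) (polyToR i t q')

end Defs

/-!
Writing `x ∈ S` uniquely as `∑ aₖ ∘ tᵏ` and sending it to `∑ aₖ tᵏ ∈ D[t;δ]` is an additive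
bijection `S → S_f`. The vanishing associators let `D` and the powers of `t` be moved through
products, so multiplicativity comes down to `t ∘ (a ∘ tᵏ) = a ∘ tᵏ⁺¹ + δ(a) ∘ tᵏ`; for `k = p - 1`
the relation `tᵖ = t + d` is exactly the reduction modulo `f = tᵖ - t - d`. As `S` has no zero
divisors, `f` has no factorization into factors of degree `< p`.

Since `S` is not associative, `f` is not two-sided. Then the middle nucleus of `S_f` is `D`: if
`x` is middle-nuclear of degree `k ≥ 1` with leading coefficient `u`, then
`tᵖ⁻ᵏ x = u f + v` with `deg v < p`, and comparing `(tᵖ⁻ᵏ ∘ x) ∘ z` with `tᵖ⁻ᵏ ∘ (x ∘ z)` gives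
`f z ≡ 0 mod_r f` for every `z`, i.e. `f` is two-sided. Automorphisms preserve the middle
nucleus, so they restrict to automorphisms of `D`.
-/

/-! ### Degrees in `D[t;δ]` -/

namespace DegLt

variable {D R : Type*} [Ring D] [Ring R] {coeff : R ≃+ (ℕ →₀ D)} {m : ℕ} {x y : R}

theorem mono (h : DegLt coeff m x) {m' : ℕ} (hm : m ≤ m') : DegLt coeff m' x :=
  fun n hn => h n (hm.trans hn)

theorem zero : DegLt coeff m (0 : R) := fun n _ => by rw [map_zero, Finsupp.zero_apply]

theorem add (hx : DegLt coeff m x) (hy : DegLt coeff m y) : DegLt coeff m (x + y) :=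
  fun n hn => by rw [map_add, Finsupp.add_apply, hx n hn, hy n hn, add_zero]

theorem sub (hx : DegLt coeff m x) (hy : DegLt coeff m y) : DegLt coeff m (x - y) :=
  fun n hn => by rw [map_sub, Finsupp.sub_apply, hx n hn, hy n hn, sub_zero]

theorem sum {ι : Type*} {s : Finset ι} {g : ι → R} (h : ∀ k ∈ s, DegLt coeff m (g k)) :
    DegLt coeff m (∑ k ∈ s, g k) := fun n hn => by
  rw [map_sum, Finsupp.finsetSum_apply]
  exact Finset.sum_eq_zero fun k hk => h k hk n hn

theorem lt_of_coeff_ne_zero (h : DegLt coeff m x) {n : ℕ} (hn : coeff x n ≠ 0) : n < m :=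
  Nat.lt_of_not_le fun hmn => hn (h n hmn)

end DegLt

theorem exists_degLt_succ_of_ne_zero {D R : Type*} [Ring D] [Ring R] {coeff : R ≃+ (ℕ →₀ D)}
    {x : R} (hx : x ≠ 0) : ∃ k, coeff x k ≠ 0 ∧ DegLt coeff (k + 1) x := by
  have hsupp : (coeff x).support.Nonempty :=
    Finsupp.support_nonempty_iff.2 fun h => hx (coeff.injective (by rw [h, map_zero]))
  refine ⟨_, Finsupp.mem_support_iff.1 ((coeff x).support.max'_mem hsupp), fun n hn => ?_⟩
  by_contra h
  have := (coeff x).support.le_max' n (Finsupp.mem_support_iff.2 h)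
  omega

namespace IsDiffPolyRing

variable {D R : Type*} [Ring D] [Ring R] {δ : D → D} {i : D →+* R} {t : R}
  {coeff : R ≃+ (ℕ →₀ D)}

theorem coeff_monomial (hR : IsDiffPolyRing δ i t coeff) (n : ℕ) (a : D) :
    coeff (i a * t ^ n) = single n a := by
  rw [← hR.2, coeff.apply_symm_apply]

theorem coeff_C (hR : IsDiffPolyRing δ i t coeff) (a : D) : coeff (i a) = single 0 a := by
  simpa using hR.coeff_monomial 0 a

theorem coeff_pow (hR : IsDiffPolyRing δ i t coeff) (n : ℕ) : coeff (t ^ n) = single n 1 := by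
  simpa using hR.coeff_monomial n 1

theorem injective (hR : IsDiffPolyRing δ i t coeff) : Function.Injective i := fun a b h =>
  Finsupp.single_injective 0 (by simpa [hR.coeff_C] using congrArg coeff h)

theorem isDeriv (hR : IsDiffPolyRing δ i t coeff) : IsDeriv δ := by
  have hδ (a : D) : i (δ a) = t * i a - i a * t := by rw [hR.1]; abel
  refine ⟨fun a b => hR.injective ?_, fun a b => hR.injective ?_⟩
  · rw [map_add, hδ, hδ, hδ, map_add]; noncomm_ring
  · rw [map_add, map_mul, map_mul, hδ, hδ, hδ, map_mul]; noncomm_ring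

theorem eq_sum_monomial (hR : IsDiffPolyRing δ i t coeff) (x : R) :
    x = ∑ n ∈ (coeff x).support, i (coeff x n) * t ^ n := by
  conv_lhs => rw [← coeff.symm_apply_apply x, ← Finsupp.sum_single (coeff x)]
  rw [Finsupp.sum, map_sum]
  exact Finset.sum_congr rfl fun n _ => hR.2 n _

theorem eq_C_of_degLt_one (hR : IsDiffPolyRing δ i t coeff) {x : R} (hx : DegLt coeff 1 x) :
    x = i (coeff x 0) :=
  coeff.injective <| Finsupp.ext fun n => by
    rw [hR.coeff_C, Finsupp.single_apply]
    rcases n.eq_zero_or_pos with rfl | hn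
    · rw [if_pos rfl]
    · rw [if_neg hn.ne, hx n hn]

theorem coeff_C_mul (hR : IsDiffPolyRing δ i t coeff) (a : D) (x : R) (n : ℕ) :
    coeff (i a * x) n = a * coeff x n := by
  conv_lhs => rw [hR.eq_sum_monomial x, Finset.mul_sum]
  simp only [← mul_assoc, ← map_mul, map_sum, Finsupp.finsetSum_apply, hR.coeff_monomial,
    Finsupp.single_apply, Finset.sum_ite_eq']
  split_ifs with h
  · rfl
  · rw [Finsupp.notMem_support_iff.1 h, mul_zero]

theorem coeff_mul_pow (hR : IsDiffPolyRing δ i t coeff) (x : R) (k n : ℕ) :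
    coeff (x * t ^ k) (n + k) = coeff x n := by
  conv_lhs => rw [hR.eq_sum_monomial x, Finset.sum_mul]
  simp only [mul_assoc, ← pow_add, map_sum, Finsupp.finsetSum_apply, hR.coeff_monomial,
    Finsupp.single_apply, add_left_inj, Finset.sum_ite_eq']
  split_ifs with h
  · rfl
  · exact (Finsupp.notMem_support_iff.1 h).symm

theorem coeff_sum_fin (hR : IsDiffPolyRing δ i t coeff) {p : ℕ} (c : Fin p → D) (k : Fin p) :
    coeff (∑ l : Fin p, i (c l) * t ^ (l : ℕ)) k = c k := by
  simp_rw [map_sum, Finsupp.finsetSum_apply, hR.coeff_monomial, Finsupp.single_apply,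
    Fin.val_inj, Finset.sum_ite_eq', Finset.mem_univ, if_true]

theorem degLt_monomial (hR : IsDiffPolyRing δ i t coeff) {m k : ℕ} (hk : k < m) (a : D) :
    DegLt coeff m (i a * t ^ k) := fun n hn => by
  rw [hR.coeff_monomial, Finsupp.single_apply, if_neg (by omega)]

theorem degLt_C (hR : IsDiffPolyRing δ i t coeff) {m : ℕ} (hm : 0 < m) (a : D) :
    DegLt coeff m (i a) := by
  simpa using hR.degLt_monomial hm a

theorem degLt_pow (hR : IsDiffPolyRing δ i t coeff) {m k : ℕ} (hk : k < m) :
    DegLt coeff m (t ^ k) := by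
  simpa using hR.degLt_monomial hk 1

theorem degLt_C_mul (hR : IsDiffPolyRing δ i t coeff) {m : ℕ} {x : R} (a : D)
    (hx : DegLt coeff m x) : DegLt coeff m (i a * x) := fun n hn => by
  rw [hR.coeff_C_mul, hx n hn, mul_zero]

theorem degLt_mul_pow (hR : IsDiffPolyRing δ i t coeff) {m : ℕ} {x : R} (k : ℕ)
    (hx : DegLt coeff m x) : DegLt coeff (m + k) (x * t ^ k) := fun n hn => by
  obtain ⟨n, rfl⟩ := Nat.exists_eq_add_of_le (le_of_add_le_right hn)
  rw [add_comm k n, hR.coeff_mul_pow, hx n (by omega)]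

theorem degLt_t_mul (hR : IsDiffPolyRing δ i t coeff) {m : ℕ} {x : R}
    (hx : DegLt coeff m x) : DegLt coeff (m + 1) (t * x) := by
  rw [hR.eq_sum_monomial x, Finset.mul_sum]
  refine DegLt.sum fun n hn => ?_
  have hnm := hx.lt_of_coeff_ne_zero (Finsupp.mem_support_iff.1 hn)
  rw [← mul_assoc, hR.1, add_mul, mul_assoc, ← pow_succ']
  exact (hR.degLt_monomial (by omega) _).add (hR.degLt_monomial (by omega) _)

theorem degLt_pow_mul (hR : IsDiffPolyRing δ i t coeff) {m : ℕ} {x : R} (k : ℕ)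
    (hx : DegLt coeff m x) : DegLt coeff (m + k) (t ^ k * x) := by
  induction k with
  | zero => simpa using hx
  | succ k ih => simpa [pow_succ', mul_assoc, ← add_assoc] using hR.degLt_t_mul ih

theorem degLt_mul (hR : IsDiffPolyRing δ i t coeff) {m n : ℕ} {x y : R}
    (hx : DegLt coeff m x) (hy : DegLt coeff (n + 1) y) : DegLt coeff (m + n) (x * y) := by
  rw [hR.eq_sum_monomial x, Finset.sum_mul]
  refine DegLt.sum fun k hk => ?_
  have hkm := hx.lt_of_coeff_ne_zero (Finsupp.mem_support_iff.1 hk)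
  rw [mul_assoc]
  exact hR.degLt_C_mul _ ((hR.degLt_pow_mul k hy).mono (by omega))

theorem degLt_sub_leading (hR : IsDiffPolyRing δ i t coeff) {m : ℕ} {x : R}
    (hx : DegLt coeff (m + 1) x) : DegLt coeff m (x - i (coeff x m) * t ^ m) := fun n hn => by
  rw [map_sub, Finsupp.sub_apply, hR.coeff_monomial, Finsupp.single_apply]
  rcases hn.eq_or_lt with rfl | h
  · rw [if_pos rfl, sub_self]
  · rw [hx n h, if_neg h.ne, sub_zero]

theorem exists_pow_mul_C (hR : IsDiffPolyRing δ i t coeff) (k : ℕ) (a : D) :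
    ∃ r, DegLt coeff k r ∧ t ^ k * i a = i a * t ^ k + r := by
  induction k with
  | zero => exact ⟨0, DegLt.zero, by simp⟩
  | succ k ih =>
    obtain ⟨r, hr, he⟩ := ih
    refine ⟨i (δ a) * t ^ k + t * r,
      (hR.degLt_monomial (Nat.lt_succ_self k) _).add (hR.degLt_t_mul hr), ?_⟩
    rw [pow_succ', mul_assoc, he, mul_add, ← mul_assoc, hR.1, add_mul, mul_assoc,
      ← pow_succ', add_assoc]

theorem coeff_mul_add (hR : IsDiffPolyRing δ i t coeff) {m n : ℕ} {x y : R}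
    (hx : DegLt coeff (m + 1) x) (hy : DegLt coeff (n + 1) y) :
    coeff (x * y) (m + n) = coeff x m * coeff y n := by
  obtain ⟨r, hr, hre⟩ := hR.exists_pow_mul_C m (coeff y n)
  -- only the product of the two leading terms reaches degree `m + n`
  have hsplit : x * y = (x - i (coeff x m) * t ^ m) * y
      + i (coeff x m) * (t ^ m * (y - i (coeff y n) * t ^ n)) + i (coeff x m) * (r * t ^ n)
      + i (coeff x m * coeff y n) * t ^ (m + n) := by
    have : i (coeff x m * coeff y n) * t ^ (m + n)
        = i (coeff x m) * (t ^ m * (i (coeff y n) * t ^ n)) - i (coeff x m) * (r * t ^ n) := by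
      rw [← mul_assoc (t ^ m), hre, map_mul, pow_add]; noncomm_ring
    rw [this]
    noncomm_ring
  have c1 := hR.degLt_mul (hR.degLt_sub_leading hx) hy (m + n) le_rfl
  have c2 := hR.degLt_C_mul (coeff x m) ((hR.degLt_pow_mul m (hR.degLt_sub_leading hy)).mono
    (by omega : n + m ≤ m + n)) (m + n) le_rfl
  have c3 := hR.degLt_C_mul (coeff x m) (hR.degLt_mul_pow n hr) (m + n) le_rfl
  rw [hsplit]
  simp only [map_add, Finsupp.add_apply, c1, c2, c3, hR.coeff_monomial, Finsupp.single_eq_same,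
    zero_add]

theorem monicDeg_pow_sub_sub (hR : IsDiffPolyRing δ i t coeff) {p : ℕ} (hp : 1 < p) (d : D) :
    MonicDeg coeff p (t ^ p - t - i d) := by
  have hc (n : ℕ) : coeff (t ^ p - t - i d) n = single p 1 n - single 1 1 n - single 0 d n := by
    have ht : coeff t = single 1 1 := by simpa using hR.coeff_pow 1
    rw [map_sub, map_sub, hR.coeff_pow, ht, hR.coeff_C]; rfl
  refine ⟨?_, fun n hn => ?_⟩
  · rw [hc]
    simp [(show (1 : ℕ) ≠ p by omega), (show (0 : ℕ) ≠ p by omega)]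
  · rw [hc]
    simp [(show p ≠ n by omega), (show (1 : ℕ) ≠ n by omega), (show (0 : ℕ) ≠ n by omega)]

end IsDiffPolyRing

namespace MonicDeg

variable {D R : Type*} [Ring D] [Ring R] {δ : D → D} {i : D →+* R} {t : R}
  {coeff : R ≃+ (ℕ →₀ D)} {m : ℕ} {f : R}

theorem degLt_pow_sub (hR : IsDiffPolyRing δ i t coeff) (hf : MonicDeg coeff m f) :
    DegLt coeff m (t ^ m - f) := fun n hn => by
  rw [map_sub, Finsupp.sub_apply, hR.coeff_pow, Finsupp.single_apply]
  rcases hn.eq_or_lt with rfl | h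
  · rw [if_pos rfl, hf.1, sub_self]
  · rw [if_neg h.ne, hf.2 n h, sub_zero]

theorem not_degLt_mul (hR : IsDiffPolyRing δ i t coeff) (hf : MonicDeg coeff m f) {u : R}
    (hu : u ≠ 0) : ¬DegLt coeff m (u * f) := fun h => by
  obtain ⟨k, hk, hku⟩ := exists_degLt_succ_of_ne_zero (coeff := coeff) hu
  have := hR.coeff_mul_add hku hf.2
  rw [hf.1, mul_one, h _ (by omega)] at this
  exact hk this.symm

theorem eq_of_mul_add_eq (hR : IsDiffPolyRing δ i t coeff) (hf : MonicDeg coeff m f)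
    {q q' r r' : R} (hr : DegLt coeff m r) (hr' : DegLt coeff m r')
    (h : q * f + r = q' * f + r') : r = r' := by
  have hq : q = q' := by
    by_contra hne
    have hdiff : (q - q') * f = r' - r := by
      rw [sub_mul, sub_eq_sub_iff_add_eq_add, h, add_comm]
    exact hf.not_degLt_mul hR (sub_ne_zero.2 hne) (hdiff ▸ hr'.sub hr)
  rw [hq] at h
  exact add_left_cancel h

theorem exists_pow_mul_eq (hR : IsDiffPolyRing δ i t coeff) (hf : MonicDeg coeff m f) {k : ℕ}
    {x : R} (hk : k ≤ m) (hx : DegLt coeff (k + 1) x) :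
    ∃ v, DegLt coeff m v ∧ t ^ (m - k) * x = i (coeff x k) * f + v := by
  obtain ⟨r, hr, hre⟩ := hR.exists_pow_mul_C (m - k) (coeff x k)
  refine ⟨i (coeff x k) * (t ^ m - f) + r * t ^ k + t ^ (m - k) * (x - i (coeff x k) * t ^ k),
    ((hR.degLt_C_mul _ (hf.degLt_pow_sub hR)).add ?_).add ?_, ?_⟩
  · exact (hR.degLt_mul_pow k hr).mono (by omega)
  · exact (hR.degLt_pow_mul (m - k) (hR.degLt_sub_leading hx)).mono (by omega)
  · have hlead : t ^ (m - k) * (i (coeff x k) * t ^ k) = i (coeff x k) * t ^ m + r * t ^ k := by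
      rw [← mul_assoc, hre, add_mul, mul_assoc, ← pow_add, Nat.sub_add_cancel hk]
    have hsplit : t ^ (m - k) * x = t ^ (m - k) * (i (coeff x k) * t ^ k)
        + t ^ (m - k) * (x - i (coeff x k) * t ^ k) := by noncomm_ring
    rw [hsplit, hlead]
    noncomm_ring

end MonicDeg

/-! ### The Petit algebra `S_f` -/

-- For a Petit multiplication `mul`, `mul x 1` is the remainder `x mod_r f`.
namespace IsPetitMul

variable {D R : Type*} [Ring D] [Ring R] {δ : D → D} {i : D →+* R} {t : R}
  {coeff : R ≃+ (ℕ →₀ D)} {m : ℕ} {f : R} {mul : R → R → R}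

theorem exists_eq_mul_add (hmul : IsPetitMul coeff f m mul) (x : R) :
    ∃ q, x = q * f + mul x 1 := by
  simpa using (hmul x 1).2

theorem mul_one_eq_of_eq_mul_add (hR : IsDiffPolyRing δ i t coeff) (hf : MonicDeg coeff m f)
    (hmul : IsPetitMul coeff f m mul) {x q r : R} (hr : DegLt coeff m r) (h : x = q * f + r) :
    mul x 1 = r := by
  obtain ⟨q', hq'⟩ := hmul.exists_eq_mul_add x
  exact hf.eq_of_mul_add_eq hR (hmul x 1).1 hr (hq'.symm.trans h)

theorem mul_eq_mul_one (hR : IsDiffPolyRing δ i t coeff) (hf : MonicDeg coeff m f)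
    (hmul : IsPetitMul coeff f m mul) (x y : R) : mul x y = mul (x * y) 1 := by
  obtain ⟨q, hq⟩ := (hmul x y).2
  exact (hmul.mul_one_eq_of_eq_mul_add hR hf (hmul x y).1 hq).symm

theorem mul_one_of_degLt (hR : IsDiffPolyRing δ i t coeff) (hf : MonicDeg coeff m f)
    (hmul : IsPetitMul coeff f m mul) {x : R} (hx : DegLt coeff m x) : mul x 1 = x :=
  hmul.mul_one_eq_of_eq_mul_add hR hf hx (by rw [zero_mul, zero_add])

theorem mul_add_mul_one (hR : IsDiffPolyRing δ i t coeff) (hf : MonicDeg coeff m f)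
    (hmul : IsPetitMul coeff f m mul) (q x : R) : mul (q * f + x) 1 = mul x 1 := by
  obtain ⟨q', hq'⟩ := hmul.exists_eq_mul_add x
  refine hmul.mul_one_eq_of_eq_mul_add hR hf (hmul x 1).1 (q := q + q') ?_
  conv_lhs => rw [hq']
  noncomm_ring

theorem mul_f_mul_one_eq_zero (hR : IsDiffPolyRing δ i t coeff) (hf : MonicDeg coeff m f)
    (hmul : IsPetitMul coeff f m mul) (q : R) : mul (q * f) 1 = 0 := by
  simpa using hmul.mul_add_mul_one hR hf q 0 |>.trans (hmul.mul_one_of_degLt hR hf DegLt.zero)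

theorem add_mul_one (hR : IsDiffPolyRing δ i t coeff) (hf : MonicDeg coeff m f)
    (hmul : IsPetitMul coeff f m mul) (x y : R) : mul (x + y) 1 = mul x 1 + mul y 1 := by
  obtain ⟨qx, hqx⟩ := hmul.exists_eq_mul_add x
  obtain ⟨qy, hqy⟩ := hmul.exists_eq_mul_add y
  refine hmul.mul_one_eq_of_eq_mul_add hR hf ((hmul x 1).1.add (hmul y 1).1) (q := qx + qy) ?_
  conv_lhs => rw [hqx, hqy]
  noncomm_ring

theorem finsetSum_mul_one (hR : IsDiffPolyRing δ i t coeff) (hf : MonicDeg coeff m f)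
    (hmul : IsPetitMul coeff f m mul) {ι : Type*} (s : Finset ι) (g : ι → R) :
    mul (∑ k ∈ s, g k) 1 = ∑ k ∈ s, mul (g k) 1 :=
  map_sum (AddMonoidHom.mk' (mul · 1) (hmul.add_mul_one hR hf)) g s

theorem sub_mul_one (hR : IsDiffPolyRing δ i t coeff) (hf : MonicDeg coeff m f)
    (hmul : IsPetitMul coeff f m mul) (x y : R) : mul (x - y) 1 = mul x 1 - mul y 1 :=
  (AddMonoidHom.mk' (mul · 1) (hmul.add_mul_one hR hf)).map_sub x y

theorem C_mul_mul_one (hR : IsDiffPolyRing δ i t coeff) (hf : MonicDeg coeff m f)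
    (hmul : IsPetitMul coeff f m mul) (a : D) (x : R) : mul (i a * x) 1 = i a * mul x 1 := by
  obtain ⟨q, hq⟩ := hmul.exists_eq_mul_add x
  refine hmul.mul_one_eq_of_eq_mul_add hR hf (hR.degLt_C_mul a (hmul x 1).1) (q := i a * q) ?_
  conv_lhs => rw [hq]
  noncomm_ring

theorem mul_mul_one_eq (hR : IsDiffPolyRing δ i t coeff) (hf : MonicDeg coeff m f)
    (hmul : IsPetitMul coeff f m mul) (z x : R) : mul (z * mul x 1) 1 = mul (z * x) 1 := by
  obtain ⟨q, hq⟩ := hmul.exists_eq_mul_add x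
  conv_rhs => rw [hq, mul_add, ← mul_assoc, hmul.mul_add_mul_one hR hf]

theorem mul_one_mul_eq_of_twoSided (hR : IsDiffPolyRing δ i t coeff) (hf : MonicDeg coeff m f)
    (hmul : IsPetitMul coeff f m mul) (hfTS : TwoSidedElem f) (x z : R) :
    mul (mul x 1 * z) 1 = mul (x * z) 1 := by
  obtain ⟨q, hq⟩ := hmul.exists_eq_mul_add x
  obtain ⟨q', hq'⟩ := hfTS z
  conv_rhs => rw [hq, add_mul, mul_assoc, hq', ← mul_assoc, hmul.mul_add_mul_one hR hf]

theorem assoc_of_twoSided (hR : IsDiffPolyRing δ i t coeff) (hf : MonicDeg coeff m f)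
    (hmul : IsPetitMul coeff f m mul) (hfTS : TwoSidedElem f) (x y z : R) :
    mul (mul x y) z = mul x (mul y z) := by
  rw [hmul.mul_eq_mul_one hR hf x y, hmul.mul_eq_mul_one hR hf y z, hmul.mul_eq_mul_one hR hf,
    hmul.mul_one_mul_eq_of_twoSided hR hf hfTS, hmul.mul_eq_mul_one hR hf x,
    hmul.mul_mul_one_eq hR hf, mul_assoc]

theorem twoSided_of_forall_mul_one_eq_zero (hmul : IsPetitMul coeff f m mul)
    (h : ∀ z, DegLt coeff m z → mul (f * z) 1 = 0) : TwoSidedElem f := fun r => by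
  obtain ⟨q, hq⟩ := hmul.exists_eq_mul_add r
  obtain ⟨q', hq'⟩ := hmul.exists_eq_mul_add (f * mul r 1)
  rw [h _ (hmul r 1).1, add_zero] at hq'
  exact ⟨f * q + q', by rw [add_mul, ← hq', mul_assoc, ← mul_add, ← hq]⟩

theorem irredDeg [Nontrivial D] (hR : IsDiffPolyRing δ i t coeff) (hf : MonicDeg coeff m f)
    (hmul : IsPetitMul coeff f m mul)
    (h : ∀ x ∈ SfSet coeff m, ∀ y ∈ SfSet coeff m, mul x y = 0 → x = 0 ∨ y = 0) :
    IrredDeg coeff m f := by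
  rintro ⟨g, k, hgk, hg, hk⟩
  have hf0 : f ≠ 0 := fun h0 => one_ne_zero (α := D) (by simpa [h0] using hf.1.symm)
  have hmul0 : mul g k = 0 := by
    rw [hmul.mul_eq_mul_one hR hf, ← hgk, ← one_mul f, hmul.mul_f_mul_one_eq_zero hR hf]
  rcases h g hg k hk hmul0 with rfl | rfl
  · exact hf0 (by rw [hgk, zero_mul])
  · exact hf0 (by rw [hgk, mul_zero])

theorem C_mem_midNuc (hR : IsDiffPolyRing δ i t coeff) (hf : MonicDeg coeff m f)
    (hmul : IsPetitMul coeff f m mul) (hm : 0 < m) (a : D) :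
    i a ∈ MidNuc (SfSet coeff m) mul := by
  refine ⟨hR.degLt_C hm a, fun y (hy : DegLt coeff m y) z (hz : DegLt coeff m z) => ?_⟩
  have hya : mul y (i a) = y * i a := by
    rw [hmul.mul_eq_mul_one hR hf, hmul.mul_one_of_degLt hR hf]
    simpa using hR.degLt_mul hy (hR.degLt_C (Nat.succ_pos 0) a)
  have haz : mul (i a) z = i a * z := by
    rw [hmul.mul_eq_mul_one hR hf, hmul.mul_one_of_degLt hR hf (hR.degLt_C_mul a hz)]
  rw [hya, haz, hmul.mul_eq_mul_one hR hf, hmul.mul_eq_mul_one hR hf y, mul_assoc]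

end IsPetitMul

namespace IsPetitMul

variable {D R : Type*} [DivisionRing D] [Ring R] {δ : D → D} {i : D →+* R} {t : R}
  {coeff : R ≃+ (ℕ →₀ D)} {m : ℕ} {f : R} {mul : R → R → R}

theorem twoSided_of_mem_midNuc (hR : IsDiffPolyRing δ i t coeff) (hf : MonicDeg coeff m f)
    (hmul : IsPetitMul coeff f m mul) {x : R} (hx : x ∈ MidNuc (SfSet coeff m) mul) {k : ℕ}
    (hk : 1 ≤ k) (hxk : coeff x k ≠ 0) (hxdeg : DegLt coeff (k + 1) x) : TwoSidedElem f := by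
  have hkm : k < m := DegLt.lt_of_coeff_ne_zero hx.1 hxk
  obtain ⟨v, hv, hve⟩ := hf.exists_pow_mul_eq hR hkm.le hxdeg
  refine hmul.twoSided_of_forall_mul_one_eq_zero fun z hz => ?_
  have hnuc := hx.2 (t ^ (m - k)) (hR.degLt_pow (by omega)) z hz
  have hvz : v * z = t ^ (m - k) * (x * z) - i (coeff x k) * (f * z) := by
    rw [← mul_assoc, hve]; noncomm_ring
  rw [hmul.mul_eq_mul_one hR hf (t ^ (m - k)) x, hve, hmul.mul_add_mul_one hR hf,
    hmul.mul_one_of_degLt hR hf hv, hmul.mul_eq_mul_one hR hf v, hvz,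
    hmul.mul_eq_mul_one hR hf x, hmul.mul_eq_mul_one hR hf (t ^ (m - k)),
    hmul.mul_mul_one_eq hR hf, hmul.sub_mul_one hR hf, hmul.C_mul_mul_one hR hf,
    sub_eq_self] at hnuc
  simpa [← mul_assoc, ← map_mul, inv_mul_cancel₀ hxk] using congrArg (i (coeff x k)⁻¹ * ·) hnuc

theorem midNuc_eq_range (hR : IsDiffPolyRing δ i t coeff) (hf : MonicDeg coeff m f)
    (hmul : IsPetitMul coeff f m mul) (hm : 0 < m) (hfTS : ¬TwoSidedElem f) :
    MidNuc (SfSet coeff m) mul = Set.range i := by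
  refine (Set.range_subset_iff.2 (hmul.C_mem_midNuc hR hf hm)).antisymm' fun x hx => ?_
  by_cases hx1 : DegLt coeff 1 x
  · exact ⟨_, (hR.eq_C_of_degLt_one hx1).symm⟩
  have hx0 : x ≠ 0 := by rintro rfl; exact hx1 DegLt.zero
  obtain ⟨k, hxk, hxdeg⟩ := exists_degLt_succ_of_ne_zero (coeff := coeff) hx0
  have hk : 1 ≤ k := Nat.one_le_iff_ne_zero.2 fun hk => hx1 (by rwa [hk] at hxdeg)
  exact (hfTS (hmul.twoSided_of_mem_midNuc hR hf hx hk hxk hxdeg)).elim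

end IsPetitMul

theorem IsAlgIso.mem_midNuc_iff {D R : Type*} [Ring D] [Ring R] {F : Set D} {i : D →+* R}
    {S S' : Set R} {mul mul' : R → R → R} {H : R → R} (hH : IsAlgIso F i S S' mul mul' H)
    (hS : ∀ x ∈ S, ∀ y ∈ S, mul x y ∈ S) {x : R} (hx : x ∈ S) :
    H x ∈ MidNuc S' mul' ↔ x ∈ MidNuc S mul := by
  obtain ⟨hbij, -, hHmul, -⟩ := hH
  refine ⟨fun h => ⟨hx, fun y hy z hz => hbij.injOn (hS _ (hS _ hy _ hx) _ hz)
    (hS _ hy _ (hS _ hx _ hz)) ?_⟩, fun h => ⟨hbij.mapsTo hx, fun y' hy' z' hz' => ?_⟩⟩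
  · rw [hHmul _ (hS _ hy _ hx) _ hz, hHmul _ hy _ hx, hHmul _ hy _ (hS _ hx _ hz),
      hHmul _ hx _ hz]
    exact h.2 _ (hbij.mapsTo hy) _ (hbij.mapsTo hz)
  · obtain ⟨y, hy, rfl⟩ := hbij.surjOn hy'
    obtain ⟨z, hz, rfl⟩ := hbij.surjOn hz'
    rw [← hHmul _ hy _ hx, ← hHmul _ (hS _ hy _ hx) _ hz, ← hHmul _ hx _ hz,
      ← hHmul _ hy _ (hS _ hx _ hz), h.2 y hy z hz]

theorem IsAut.exists_ringEquiv_restrict {D R : Type*} [DivisionRing D] [Ring R] {δ : D → D}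
    {i : D →+* R} {t : R} {coeff : R ≃+ (ℕ →₀ D)} {m : ℕ} {f : R} {mul : R → R → R}
    {F : Set D} {H : R → R} (hH : IsAut F i (SfSet coeff m) mul H)
    (hR : IsDiffPolyRing δ i t coeff) (hf : MonicDeg coeff m f)
    (hmul : IsPetitMul coeff f m mul) (hm : 0 < m) (hfTS : ¬TwoSidedElem f) :
    ∃ τ : D ≃+* D, (∀ a, H (i a) = i (τ a)) ∧ ∀ a ∈ F, τ a = a := by
  have hclosed : ∀ x ∈ SfSet coeff m, ∀ y ∈ SfSet coeff m, mul x y ∈ SfSet coeff m :=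
    fun x _ y _ => (hmul x y).1
  have hC (a : D) : i a ∈ SfSet coeff m := hR.degLt_C hm a
  have hN := hmul.midNuc_eq_range hR hf hm hfTS
  have hmaps (a : D) : H (i a) ∈ Set.range i := by
    rw [← hN, hH.mem_midNuc_iff hclosed (hC a), hN]
    exact ⟨a, rfl⟩
  choose τ hτ using hmaps
  obtain ⟨hbij, hadd, hHmul, hone, hlin⟩ := id hH
  have hCmul (a b : D) : mul (i a) (i b) = i (a * b) := by
    rw [hmul.mul_eq_mul_one hR hf, ← map_mul, hmul.mul_one_of_degLt hR hf (hC _)]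
  have hτone : τ 1 = 1 := hR.injective (by rw [hτ, map_one, hone])
  have hτmul (a b : D) : τ (a * b) = τ a * τ b := hR.injective <| by
    rw [hτ, ← hCmul, hHmul _ (hC a) _ (hC b), ← hτ, ← hτ, hCmul]
  have hτadd (a b : D) : τ (a + b) = τ a + τ b := hR.injective <| by
    rw [hτ, map_add, map_add, hadd _ (hC a) _ (hC b), ← hτ, ← hτ]
  have hinj : Function.Injective τ := fun a b hab =>
    hR.injective (hbij.injOn (hC a) (hC b) (by rw [← hτ, ← hτ, hab]))
  have hsurj : Function.Surjective τ := fun b => by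
    obtain ⟨x, hx, hxb⟩ := hbij.surjOn (hC b)
    have hxN : x ∈ MidNuc (SfSet coeff m) mul := by
      rw [← hH.mem_midNuc_iff hclosed hx, hxb, hN]; exact ⟨b, rfl⟩
    obtain ⟨a, rfl⟩ := hN ▸ hxN
    exact ⟨a, hR.injective (by rw [hτ, hxb])⟩
  refine ⟨RingEquiv.ofBijective (RingHom.mk' ⟨⟨τ, hτone⟩, hτmul⟩ hτadd) ⟨hinj, hsurj⟩,
    fun a => (hτ a).symm, fun a ha => hR.injective ?_⟩
  have := hlin a ha 1 (by simpa using hC 1)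
  rwa [mul_one, hone, mul_one, ← hτ] at this

/-! ### The algebra `S` -/

def leftPow {S : Type*} (mul : S → S → S) (t one : S) (k : ℕ) : S := (fun y => mul t y)^[k] one

theorem leftPow_zero {S : Type*} (mul : S → S → S) (t one : S) : leftPow mul t one 0 = one := rfl

theorem leftPow_succ {S : Type*} (mul : S → S → S) (t one : S) (k : ℕ) :
    leftPow mul t one (k + 1) = mul t (leftPow mul t one k) :=
  Function.iterate_succ_apply' _ k one

/-- Conditions (1)–(4) on `D ⊆ S`, where `tᵏ` is `leftPow mul t one k`. -/
structure IsDiffExtension {D S : Type*} [Ring D] [AddCommGroup S] (p : ℕ) (mul : S → S → S)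
    (one : S) (j : D → S) (t : S) (δ : D → D) (d : D) : Prop where
  mul_add : ∀ x y z, mul x (y + z) = mul x y + mul x z
  add_mul : ∀ x y z, mul (x + y) z = mul x z + mul y z
  one_mul : ∀ x, mul one x = x
  mul_one : ∀ x, mul x one = x
  map_add : ∀ a b, j (a + b) = j a + j b
  map_mul : ∀ a b, j (a * b) = mul (j a) (j b)
  map_one : j 1 = one
  basis : ∀ x, ∃! c : Fin p → D, x = ∑ k : Fin p, mul (j (c k)) (leftPow mul t one k)
  t_mul_C : ∀ a, mul t (j a) = mul (j a) t + j (δ a)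
  assoc : ∀ (a b c : D) (k l n : ℕ), k + l < p → n < p →
    mul (mul (mul (j a) (leftPow mul t one k)) (mul (j b) (leftPow mul t one l)))
        (mul (j c) (leftPow mul t one n)) =
      mul (mul (j a) (leftPow mul t one k))
        (mul (mul (j b) (leftPow mul t one l)) (mul (j c) (leftPow mul t one n)))
  leftPow_p : leftPow mul t one p = t + j d

namespace IsDiffExtension

variable {D S R : Type*} [Ring D] [AddCommGroup S] [Ring R] {p : ℕ} {mul : S → S → S}
  {one : S} {j : D → S} {t : S} {δ : D → D} {d : D} {i : D →+* R} {tR : R}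
  {coeff : R ≃+ (ℕ →₀ D)} {mulS : R → R → R}

local notation "T" => leftPow mul t one

theorem leftPow_one (hS : IsDiffExtension p mul one j t δ d) : T 1 = t := hS.mul_one t

theorem mul_zero (hS : IsDiffExtension p mul one j t δ d) (x : S) : mul x 0 = 0 := by
  simpa using hS.mul_add x 0 0

theorem zero_mul (hS : IsDiffExtension p mul one j t δ d) (x : S) : mul 0 x = 0 := by
  simpa using hS.add_mul 0 0 x

theorem map_zero (hS : IsDiffExtension p mul one j t δ d) : j 0 = 0 := by
  simpa using hS.map_add 0 0

theorem mul_sum (hS : IsDiffExtension p mul one j t δ d) {ι : Type*} (s : Finset ι)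
    (x : S) (g : ι → S) : mul x (∑ k ∈ s, g k) = ∑ k ∈ s, mul x (g k) :=
  map_sum (AddMonoidHom.mk' (mul x) (hS.mul_add x)) g s

theorem sum_mul (hS : IsDiffExtension p mul one j t δ d) {ι : Type*} (s : Finset ι)
    (g : ι → S) (x : S) : mul (∑ k ∈ s, g k) x = ∑ k ∈ s, mul (g k) x :=
  map_sum (AddMonoidHom.mk' (mul · x) (hS.add_mul · · x)) g s

noncomputable def coord (hS : IsDiffExtension p mul one j t δ d) (x : S) : Fin p → D :=
  (hS.basis x).exists.choose

theorem eq_sum_coord (hS : IsDiffExtension p mul one j t δ d) (x : S) :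
    x = ∑ k : Fin p, mul (j (hS.coord x k)) (T k) :=
  (hS.basis x).exists.choose_spec

theorem coord_eq (hS : IsDiffExtension p mul one j t δ d) {x : S} {c : Fin p → D}
    (hc : x = ∑ k : Fin p, mul (j (c k)) (T k)) : hS.coord x = c :=
  (hS.basis x).unique (hS.eq_sum_coord x) hc

theorem assoc_left (hS : IsDiffExtension p mul one j t δ d) (a b : D) {k l : ℕ}
    (hkl : k + l < p) (z : S) :
    mul (mul (mul (j a) (T k)) (mul (j b) (T l))) z =
      mul (mul (j a) (T k)) (mul (mul (j b) (T l)) z) := by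
  rw [hS.eq_sum_coord z, hS.mul_sum, hS.mul_sum, hS.mul_sum]
  exact Finset.sum_congr rfl fun n _ => hS.assoc a b _ k l n hkl n.isLt

theorem C_mul_C_mul (hS : IsDiffExtension p mul one j t δ d) (hp : 0 < p) (a b : D) (z : S) :
    mul (mul (j a) (j b)) z = mul (j a) (mul (j b) z) := by
  simpa [leftPow_zero, hS.mul_one] using hS.assoc_left a b (k := 0) (l := 0) hp z

theorem C_mul_leftPow_mul (hS : IsDiffExtension p mul one j t δ d) (a : D) {k : ℕ}
    (hk : k < p) (z : S) : mul (mul (j a) (T k)) z = mul (j a) (mul (T k) z) := by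
  simpa [leftPow_zero, hS.mul_one, hS.map_one, hS.one_mul] using
    hS.assoc_left a 1 (k := 0) (l := k) (by omega) z

theorem leftPow_succ_mul (hS : IsDiffExtension p mul one j t δ d) {k : ℕ} (hk : k + 1 < p)
    (z : S) : mul (T (k + 1)) z = mul t (mul (T k) z) := by
  simpa [hS.map_one, hS.one_mul, hS.leftPow_one, ← leftPow_succ, add_comm 1 k] using
    hS.assoc_left 1 1 (k := 1) (l := k) (by omega) z

theorem t_mul_C_mul (hS : IsDiffExtension p mul one j t δ d) (hp : 1 < p) (a : D) (z : S) :
    mul (mul t (j a)) z = mul t (mul (j a) z) := by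
  simpa [leftPow_zero, hS.mul_one, hS.map_one, hS.one_mul, hS.leftPow_one] using
    hS.assoc_left 1 a (k := 1) (l := 0) hp z

theorem C_mul_t_mul (hS : IsDiffExtension p mul one j t δ d) (hp : 1 < p) (a : D) (z : S) :
    mul (mul (j a) t) z = mul (j a) (mul t z) := by
  simpa [hS.leftPow_one] using hS.C_mul_leftPow_mul a hp z

noncomputable def toPetit (hS : IsDiffExtension p mul one j t δ d) (i : D →+* R) (tR : R)
    (x : S) : R :=
  ∑ k : Fin p, i (hS.coord x k) * tR ^ (k : ℕ)

theorem toPetit_sum (hS : IsDiffExtension p mul one j t δ d) (c : Fin p → D) :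
    hS.toPetit i tR (∑ k : Fin p, mul (j (c k)) (T k)) = ∑ k : Fin p, i (c k) * tR ^ (k : ℕ) := by
  rw [toPetit, hS.coord_eq rfl]

theorem toPetit_add (hS : IsDiffExtension p mul one j t δ d) (x y : S) :
    hS.toPetit i tR (x + y) = hS.toPetit i tR x + hS.toPetit i tR y := by
  have hxy : x + y = ∑ k : Fin p, mul (j (hS.coord x k + hS.coord y k)) (T k) := by
    conv_lhs => rw [hS.eq_sum_coord x, hS.eq_sum_coord y]
    rw [← Finset.sum_add_distrib]
    exact Finset.sum_congr rfl fun k _ => by rw [hS.map_add, hS.add_mul]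
  rw [hxy, toPetit_sum, toPetit, toPetit, ← Finset.sum_add_distrib]
  simp only [_root_.map_add, _root_.add_mul]

theorem toPetit_finsetSum (hS : IsDiffExtension p mul one j t δ d) {ι : Type*} (s : Finset ι)
    (g : ι → S) : hS.toPetit i tR (∑ k ∈ s, g k) = ∑ k ∈ s, hS.toPetit i tR (g k) :=
  map_sum (AddMonoidHom.mk' (hS.toPetit i tR) hS.toPetit_add) g s

theorem toPetit_monomial (hS : IsDiffExtension p mul one j t δ d) (a : D) {k : ℕ}
    (hk : k < p) : hS.toPetit i tR (mul (j a) (T k)) = i a * tR ^ k := by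
  have hsingle :
      mul (j a) (T k) = ∑ l : Fin p, mul (j ((Pi.single ⟨k, hk⟩ a : Fin p → D) l)) (T l) := by
    rw [Finset.sum_eq_single ⟨k, hk⟩ (fun l _ hl => by
      rw [Pi.single_eq_of_ne hl, hS.map_zero, hS.zero_mul]) (by simp), Pi.single_eq_same]
  rw [hsingle, toPetit_sum, Finset.sum_eq_single ⟨k, hk⟩ (fun l _ hl => by
    rw [Pi.single_eq_of_ne hl, _root_.map_zero, MulZeroClass.zero_mul]) (by simp),
    Pi.single_eq_same]

theorem toPetit_C (hS : IsDiffExtension p mul one j t δ d) (hp : 0 < p) (a : D) :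
    hS.toPetit i tR (j a) = i a := by
  simpa [leftPow_zero, hS.mul_one] using hS.toPetit_monomial (i := i) (tR := tR) a hp

theorem toPetit_one (hS : IsDiffExtension p mul one j t δ d) (hp : 0 < p) :
    hS.toPetit i tR one = 1 := by
  simpa [hS.map_one] using hS.toPetit_C (i := i) (tR := tR) hp 1

theorem toPetit_t (hS : IsDiffExtension p mul one j t δ d) (hp : 1 < p) :
    hS.toPetit i tR t = tR := by
  simpa [hS.map_one, hS.one_mul, hS.leftPow_one] using
    hS.toPetit_monomial (i := i) (tR := tR) 1 hp

theorem coeff_toPetit (hS : IsDiffExtension p mul one j t δ d)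
    (hR : IsDiffPolyRing δ i tR coeff) (x : S) (k : Fin p) :
    coeff (hS.toPetit i tR x) k = hS.coord x k :=
  hR.coeff_sum_fin _ k

theorem injective_toPetit (hS : IsDiffExtension p mul one j t δ d)
    (hR : IsDiffPolyRing δ i tR coeff) : Function.Injective (hS.toPetit i tR) := fun x y h => by
  have hc : hS.coord x = hS.coord y := funext fun k => by
    rw [← hS.coeff_toPetit hR, h, hS.coeff_toPetit hR]
  rw [hS.eq_sum_coord x, hS.eq_sum_coord y, hc]

theorem range_toPetit (hS : IsDiffExtension p mul one j t δ d)
    (hR : IsDiffPolyRing δ i tR coeff) : Set.range (hS.toPetit i tR) = SfSet coeff p := by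
  ext r
  constructor
  · rintro ⟨x, rfl⟩
    exact DegLt.sum fun k _ => hR.degLt_monomial k.isLt _
  · intro hr
    refine ⟨∑ k : Fin p, mul (j (coeff r k)) (T k), ?_⟩
    rw [toPetit_sum]
    refine coeff.injective (Finsupp.ext fun n => ?_)
    by_cases hn : n < p
    · exact hR.coeff_sum_fin (fun k : Fin p => coeff r k) ⟨n, hn⟩
    · rw [hr n (not_lt.1 hn), map_sum, Finsupp.finsetSum_apply]
      refine Finset.sum_eq_zero fun k _ => ?_
      rw [hR.coeff_monomial, Finsupp.single_apply, if_neg (by omega)]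

theorem toPetit_C_mul (hS : IsDiffExtension p mul one j t δ d) (hp : 0 < p) (a : D) (y : S) :
    hS.toPetit i tR (mul (j a) y) = i a * hS.toPetit i tR y := by
  have hy : mul (j a) y = ∑ k : Fin p, mul (j (a * hS.coord y k)) (T k) := by
    conv_lhs => rw [hS.eq_sum_coord y]
    rw [hS.mul_sum]
    exact Finset.sum_congr rfl fun k _ => by rw [hS.map_mul, hS.C_mul_C_mul hp]
  rw [hy, toPetit_sum, toPetit, Finset.mul_sum]
  simp only [_root_.map_mul, mul_assoc]

theorem toPetit_t_mul_monomial (hS : IsDiffExtension p mul one j t δ d)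
    (hR : IsDiffPolyRing δ i tR coeff) (hmul : IsPetitMul coeff (tR ^ p - tR - i d) p mulS)
    (hp : 1 < p) (a : D) {k : ℕ} (hk : k < p) :
    hS.toPetit i tR (mul t (mul (j a) (T k))) = mulS (tR * (i a * tR ^ k)) 1 := by
  have hf := hR.monicDeg_pow_sub_sub hp d
  have hS_expand : mul t (mul (j a) (T k)) = mul (j a) (T (k + 1)) + mul (j (δ a)) (T k) := by
    rw [← hS.t_mul_C_mul hp, hS.t_mul_C, hS.add_mul, hS.C_mul_t_mul hp,
      ← leftPow_succ mul t one k]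
  have hR_expand : tR * (i a * tR ^ k) = i a * tR ^ (k + 1) + i (δ a) * tR ^ k := by
    rw [← mul_assoc, hR.1, _root_.add_mul, mul_assoc, ← pow_succ']
  rw [hS_expand, toPetit_add, hR_expand, hS.toPetit_monomial _ hk, hmul.add_mul_one hR hf,
    hmul.mul_one_of_degLt hR hf (hR.degLt_monomial hk _)]
  rcases (show k + 1 ≤ p from hk).lt_or_eq with hk1 | hk1
  · rw [hS.toPetit_monomial _ hk1, hmul.mul_one_of_degLt hR hf (hR.degLt_monomial hk1 _)]
  -- the top power wraps around through `tᵖ = t + d`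
  have hat : mul (j a) t = mul (j a) (T 1) := by rw [hS.leftPow_one]
  rw [hk1, hS.leftPow_p, hS.mul_add, ← hS.map_mul, toPetit_add, hS.toPetit_C (by omega), hat,
    hS.toPetit_monomial _ hp, pow_one]
  congr 1
  refine (hmul.mul_one_eq_of_eq_mul_add hR hf (r := i a * tR + i (a * d)) ?_ (q := i a) ?_).symm
  · simpa using (hR.degLt_monomial hp a).add (hR.degLt_C (by omega) (a * d))
  · rw [_root_.map_mul]; noncomm_ring

theorem toPetit_t_mul (hS : IsDiffExtension p mul one j t δ d)
    (hR : IsDiffPolyRing δ i tR coeff) (hmul : IsPetitMul coeff (tR ^ p - tR - i d) p mulS)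
    (hp : 1 < p) (y : S) :
    hS.toPetit i tR (mul t y) = mulS (tR * hS.toPetit i tR y) 1 := by
  have hf := hR.monicDeg_pow_sub_sub hp d
  conv_lhs => rw [hS.eq_sum_coord y, hS.mul_sum]
  rw [toPetit_finsetSum, toPetit, Finset.mul_sum, hmul.finsetSum_mul_one hR hf]
  exact Finset.sum_congr rfl fun k _ => hS.toPetit_t_mul_monomial hR hmul hp _ k.isLt

theorem toPetit_leftPow_mul (hS : IsDiffExtension p mul one j t δ d)
    (hR : IsDiffPolyRing δ i tR coeff) (hmul : IsPetitMul coeff (tR ^ p - tR - i d) p mulS)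
    (hp : 1 < p) {k : ℕ} (hk : k < p) (y : S) :
    hS.toPetit i tR (mul (T k) y) = mulS (tR ^ k * hS.toPetit i tR y) 1 := by
  have hf := hR.monicDeg_pow_sub_sub hp d
  induction k with
  | zero =>
    rw [leftPow_zero, hS.one_mul, pow_zero, _root_.one_mul,
      hmul.mul_one_of_degLt hR hf ((hS.range_toPetit hR).subset ⟨y, rfl⟩)]
  | succ k ih =>
    rw [hS.leftPow_succ_mul hk, hS.toPetit_t_mul hR hmul hp, ih (by omega),
      hmul.mul_mul_one_eq hR hf, ← mul_assoc, ← pow_succ']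

theorem toPetit_mul (hS : IsDiffExtension p mul one j t δ d)
    (hR : IsDiffPolyRing δ i tR coeff) (hmul : IsPetitMul coeff (tR ^ p - tR - i d) p mulS)
    (hp : 1 < p) (x y : S) :
    hS.toPetit i tR (mul x y) = mulS (hS.toPetit i tR x) (hS.toPetit i tR y) := by
  have hf := hR.monicDeg_pow_sub_sub hp d
  conv_lhs => rw [hS.eq_sum_coord x, hS.sum_mul]
  rw [toPetit_finsetSum, hmul.mul_eq_mul_one hR hf, toPetit, Finset.sum_mul,
    hmul.finsetSum_mul_one hR hf]
  refine Finset.sum_congr rfl fun k _ => ?_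
  rw [hS.C_mul_leftPow_mul _ k.isLt, hS.toPetit_C_mul (by omega),
    hS.toPetit_leftPow_mul hR hmul hp k.isLt, ← hmul.C_mul_mul_one hR hf, mul_assoc]

theorem petit_eq_zero_or_eq_zero (hS : IsDiffExtension p mul one j t δ d)
    (hR : IsDiffPolyRing δ i tR coeff) (hmul : IsPetitMul coeff (tR ^ p - tR - i d) p mulS)
    (hp : 1 < p) (hdiv : ∀ x, x ≠ 0 → Function.Injective (mul x)) :
    ∀ u ∈ SfSet coeff p, ∀ v ∈ SfSet coeff p, mulS u v = 0 → u = 0 ∨ v = 0 := by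
  rw [← hS.range_toPetit hR]
  rintro _ ⟨x, rfl⟩ _ ⟨y, rfl⟩ hxy
  have h0 : hS.toPetit i tR 0 = 0 := by simpa using hS.toPetit_add (i := i) (tR := tR) 0 0
  rw [← hS.toPetit_mul hR hmul hp, ← h0] at hxy
  rw [← h0]
  by_cases hx : x = 0
  · exact .inl (congrArg _ hx)
  · exact .inr (congrArg _ (hdiv x hx (by rw [hS.injective_toPetit hR hxy, hS.mul_zero])))

theorem not_twoSided_of_nonassoc (hS : IsDiffExtension p mul one j t δ d)
    (hR : IsDiffPolyRing δ i tR coeff) (hmul : IsPetitMul coeff (tR ^ p - tR - i d) p mulS)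
    (hp : 1 < p) (hnonassoc : ∃ x y z, mul (mul x y) z ≠ mul x (mul y z)) :
    ¬TwoSidedElem (tR ^ p - tR - i d) := fun hfTS => by
  obtain ⟨x, y, z, hxyz⟩ := hnonassoc
  refine hxyz (hS.injective_toPetit hR ?_)
  simp only [hS.toPetit_mul hR hmul hp]
  exact hmul.assoc_of_twoSided hR (hR.monicDeg_pow_sub_sub hp d) hfTS _ _ _

end IsDiffExtension

theorem stmt_19_general {D S R : Type*} [DivisionRing D] [Ring R]
    (p : ℕ) (hp : p.Prime)
    [AddCommGroup S] (mul : S → S → S) (one : S)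
    -- (S,∘) is a unital nonassociative division ring
    (hdistl : ∀ x y z : S, mul x (y + z) = mul x y + mul x z)
    (hdistr : ∀ x y z : S, mul (x + y) z = mul x z + mul y z)
    (hone : ∀ x : S, mul one x = x ∧ mul x one = x)
    (hdiv : ∀ x : S, x ≠ 0 →
      Function.Bijective (mul x) ∧ Function.Bijective fun y => mul y x)
    (hnonassoc : ∃ x y z : S, mul (mul x y) z ≠ mul x (mul y z))
    -- D is a subring of S
    (j : D → S)
    (hjadd : ∀ a b : D, j (a + b) = j a + j b)
    (hjmul : ∀ a b : D, j (a * b) = mul (j a) (j b)) (hjone : j 1 = one)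
    (t : S)
    -- (1) S is a free left D-module with basis 1, t, t², …, t^{p−1},
    --     where t⁰ = 1 and t^{i+1} = t ∘ tⁱ
    (hbasis : ∀ x : S, ∃! cc : Fin p → D,
      x = ∑ k : Fin p, mul (j (cc k)) ((fun y => mul t y)^[(k : ℕ)] one))
    -- (2) for every a ∈ D there is a' = δ(a) ∈ D with t∘a = a∘t + a'
    (δ : D → D) (hδdef : ∀ a : D, mul t (j a) = mul (j a) t + j (δ a))
    -- (3) the associators [a∘tⁱ, b∘tʲ, c∘tᵏ] vanish for i+j < p, k < p
    (hassoc : ∀ (a b c' : D) (iν jν kν : ℕ), iν + jν < p → kν < p →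
      mul (mul (mul (j a) ((fun y => mul t y)^[iν] one))
               (mul (j b) ((fun y => mul t y)^[jν] one)))
          (mul (j c') ((fun y => mul t y)^[kν] one)) =
      mul (mul (j a) ((fun y => mul t y)^[iν] one))
          (mul (mul (j b) ((fun y => mul t y)^[jν] one))
               (mul (j c') ((fun y => mul t y)^[kν] one))))
    -- (4) t^p = t + d for some nonzero d ∈ D
    (d : D) (htp : (fun y => mul t y)^[p] one = t + j d)
    -- R = D[t;δ] and the Petit algebra S_f, f = t^p − t − d
    (i : D →+* R) (tR : R) (coeff : R ≃+ (ℕ →₀ D))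
    (hR : IsDiffPolyRing δ i tR coeff)
    (f : R) (hfdef : f = tR ^ p - tR - i d)
    (mulS : R → R → R) (hmulS : IsPetitMul coeff f p mulS) :
    -- δ is a derivation on D
    IsDeriv δ ∧
    -- f is irreducible
    IrredDeg coeff p f ∧
    -- S ≅ S_f
    (∃ H : S → R, Function.Injective H ∧ Set.range H = SfSet coeff p ∧
      (∀ x y : S, H (x + y) = H x + H y) ∧
      (∀ x y : S, H (mul x y) = mulS (H x) (H y)) ∧
      H one = 1 ∧ H t = tR ∧ ∀ a : D, H (j a) = i a) ∧
    -- every H ∈ Aut_F(S_f) restricts to an automorphism of D fixing F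
    ∀ Haut : R → R, IsAut (F0Set δ) i (SfSet coeff p) mulS Haut →
      ∃ τ : D ≃+* D, (∀ a : D, Haut (i a) = i (τ a)) ∧ ∀ a ∈ F0Set δ, τ a = a := by
  subst hfdef
  have hp1 : 1 < p := hp.one_lt
  have hS : IsDiffExtension p mul one j t δ d := ⟨hdistl, hdistr, fun x => (hone x).1,
    fun x => (hone x).2, hjadd, hjmul, hjone, hbasis, hδdef, hassoc, htp⟩
  have hf := hR.monicDeg_pow_sub_sub hp1 d
  refine ⟨hR.isDeriv, hmulS.irredDeg hR hf (hS.petit_eq_zero_or_eq_zero hR hmulS hp1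
      fun x hx => (hdiv x hx).1.injective),
    ⟨hS.toPetit i tR, hS.injective_toPetit hR, hS.range_toPetit hR, hS.toPetit_add,
      hS.toPetit_mul hR hmulS hp1, hS.toPetit_one hp.pos, hS.toPetit_t hp1, hS.toPetit_C hp.pos⟩,
    fun H hH => hH.exists_ringEquiv_restrict hR hf hmulS hp.pos
      (hS.not_twoSided_of_nonassoc hR hmulS hp1 hnonassoc)⟩

/-- classification of nonassociative cyclic extensions of `D` of
degree `p`: if `(S,∘)` is a nonassociative division ring containing `D`, free
as a left `D`-module with basis `1, t, …, t^{p−1}` (where `t^{i+1} = t∘tⁱ`),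
satisfying conditions (2), (3), (4), then `δ(a) := t∘a − a∘t` is a derivation
of `D`, the polynomial `f(t) = t^p − t − d ∈ D[t;δ]` is irreducible,
`S ≅ S_f`, and every `H ∈ Aut_F(S_f)` restricts to an automorphism of `D`. -/
theorem stmt_19 {D S R : Type*} [DivisionRing D] [Ring R]
    (p : ℕ) (hp : p.Prime) [CharP D p]
    [AddCommGroup S] (mul : S → S → S) (one : S)
    -- (S,∘) is a unital nonassociative division ring
    (hdistl : ∀ x y z : S, mul x (y + z) = mul x y + mul x z)
    (hdistr : ∀ x y z : S, mul (x + y) z = mul x z + mul y z)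
    (hone : ∀ x : S, mul one x = x ∧ mul x one = x)
    (hdiv : ∀ x : S, x ≠ 0 →
      Function.Bijective (mul x) ∧ Function.Bijective fun y => mul y x)
    (hnonassoc : ∃ x y z : S, mul (mul x y) z ≠ mul x (mul y z))
    -- D is a subring of S
    (j : D → S) (hjinj : Function.Injective j)
    (hjadd : ∀ a b : D, j (a + b) = j a + j b)
    (hjmul : ∀ a b : D, j (a * b) = mul (j a) (j b)) (hjone : j 1 = one)
    (t : S)
    -- (1) S is a free left D-module with basis 1, t, t², …, t^{p−1},
    --     where t⁰ = 1 and t^{i+1} = t ∘ tⁱ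
    (hbasis : ∀ x : S, ∃! cc : Fin p → D,
      x = ∑ k : Fin p, mul (j (cc k)) ((fun y => mul t y)^[(k : ℕ)] one))
    -- (2) for every a ∈ D there is a' = δ(a) ∈ D with t∘a = a∘t + a'
    (δ : D → D) (hδdef : ∀ a : D, mul t (j a) = mul (j a) t + j (δ a))
    -- (3) the associators [a∘tⁱ, b∘tʲ, c∘tᵏ] vanish for i+j < p, k < p
    (hassoc : ∀ (a b c' : D) (iν jν kν : ℕ), iν + jν < p → kν < p →
      mul (mul (mul (j a) ((fun y => mul t y)^[iν] one))
               (mul (j b) ((fun y => mul t y)^[jν] one)))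
          (mul (j c') ((fun y => mul t y)^[kν] one)) =
      mul (mul (j a) ((fun y => mul t y)^[iν] one))
          (mul (mul (j b) ((fun y => mul t y)^[jν] one))
               (mul (j c') ((fun y => mul t y)^[kν] one))))
    -- (4) t^p = t + d for some nonzero d ∈ D
    (d : D) (hd0 : d ≠ 0) (htp : (fun y => mul t y)^[p] one = t + j d)
    -- R = D[t;δ] and the Petit algebra S_f, f = t^p − t − d
    (i : D →+* R) (tR : R) (coeff : R ≃+ (ℕ →₀ D))
    (hR : IsDiffPolyRing δ i tR coeff)
    (f : R) (hfdef : f = tR ^ p - tR - i d)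
    (mulS : R → R → R) (hmulS : IsPetitMul coeff f p mulS) :
    -- δ is a derivation on D
    IsDeriv δ ∧
    -- f is irreducible
    IrredDeg coeff p f ∧
    -- S ≅ S_f
    (∃ H : S → R, Function.Injective H ∧ Set.range H = SfSet coeff p ∧
      (∀ x y : S, H (x + y) = H x + H y) ∧
      (∀ x y : S, H (mul x y) = mulS (H x) (H y)) ∧
      H one = 1 ∧ H t = tR ∧ ∀ a : D, H (j a) = i a) ∧
    -- every H ∈ Aut_F(S_f) restricts to an automorphism of D fixing F
    ∀ Haut : R → R, IsAut (F0Set δ) i (SfSet coeff p) mulS Haut →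
      ∃ τ : D ≃+* D, (∀ a : D, Haut (i a) = i (τ a)) ∧ ∀ a ∈ F0Set δ, τ a = a :=
  stmt_19_general p hp mul one hdistl hdistr hone hdiv hnonassoc j hjadd hjmul hjone t hbasis δ
    hδdef hassoc d htp i tR coeff hR f hfdef mulS hmulS
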